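/- Let s^1,…,s^k be time series with s^l ∈ ℝ^{m_l}, let L ≤ U be real numbers, and let z ∈ ℝ^n be a time series with L ≤ z_j ≤ U for all j ∈ {1,…,n}. Then the Fréchet function satisfies F(z) ≥ (1/k) ∑_{l=1}^k ∑_{i=1}^{m_l} pen(s^l_i; L, U). -/

import Mathlib

/-- A warping path of order `m × n`: a finite sequence of pairs of positive
integers starting at `(1,1)`, ending at `(m,n)`, each step increasing the
coordinates by `(1,0)`, `(0,1)` or `(1,1)`. -/
structure WarpingPath (m n : ℕ) where
  len : ℕ
  len_pos : 0 < len
  pt : ℕ → ℕ × ℕ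
  first : pt 0 = (1, 1)
  last : pt (len - 1) = (m, n)
  step : ∀ t, t + 1 < len →
    pt (t + 1) = ((pt t).1 + 1, (pt t).2) ∨
    pt (t + 1) = ((pt t).1, (pt t).2 + 1) ∨
    pt (t + 1) = ((pt t).1 + 1, (pt t).2 + 1)

/-- The set of vertices `V(P)` of a warping path. -/
def WarpingPath.V {m n : ℕ} (P : WarpingPath m n) : Finset (ℕ × ℕ) :=
  (Finset.range P.len).image P.pt

/-- The cost `C_P(s, s') = ∑_{(i,j) ∈ V(P)} (s_i − s'_j)²` of a warping path. -/
noncomputable def WarpingPath.cost {m n : ℕ} (P : WarpingPath m n) (s s' : ℕ → ℝ) : ℝ :=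
  ∑ v ∈ P.V, (s v.1 - s' v.2) ^ 2

/-- The dtw-distance between a time series `s` of length `m` and a time series
`s'` of length `n`: the minimum over all warping paths `P` of order `m × n` of
`√(C_P(s, s'))`. -/
noncomputable def dtw (m n : ℕ) (s s' : ℕ → ℝ) : ℝ :=
  Real.sqrt (sInf {c : ℝ | ∃ P : WarpingPath m n, c = P.cost s s'})

/-- The penalty `pen(a; L, U)`: `(a − U)²` if `a > U`, `(L − a)²` if `a < L`,
and `0` otherwise. -/
noncomputable def pen (L U a : ℝ) : ℝ :=
  if U < a then (a - U) ^ 2 else if a < L then (L - a) ^ 2 else 0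

/-!
A warping path of order `n × m` visits every index `i ∈ [1, m]` of `s'` at some vertex `(j, i)`
with `j ∈ [1, n]`, and there `(z_j - s'_i)² ≥ pen(s'_i; L, U)` because `z_j ∈ [L, U]`. Grouping
the cost of the path by the second coordinate of its vertices bounds every path cost, hence
`dtw(z, s')²`, from below by `∑ᵢ pen(s'_i; L, U)`; averaging over the series gives the claim.
-/

open Finset

theorem exists_apply_eq_of_le_add_one {f : ℕ → ℕ} {N c : ℕ}
    (hf : ∀ t < N, f (t + 1) ≤ f t + 1) (h0 : f 0 ≤ c) (hN : c ≤ f N) :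
    ∃ t ≤ N, f t = c := by
  induction N with
  | zero => exact ⟨0, le_rfl, le_antisymm h0 hN⟩
  | succ N ih =>
    by_cases hc : c ≤ f N
    · obtain ⟨t, ht, hft⟩ := ih (fun t ht => hf t (by omega)) hc
      exact ⟨t, by omega, hft⟩
    · exact ⟨N + 1, le_rfl, by have := hf N (by omega); omega⟩

theorem pen_le_sq_sub {L U a x : ℝ} (hL : L ≤ x) (hU : x ≤ U) : pen L U a ≤ (x - a) ^ 2 := by
  unfold pen
  split_ifs
  · nlinarith
  · nlinarith
  · positivity

namespace WarpingPath

variable {m n : ℕ} (P : WarpingPath m n)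

theorem mem_V {v : ℕ × ℕ} : v ∈ P.V ↔ ∃ t < P.len, P.pt t = v := by
  simp [V]

theorem pt_succ_le {t : ℕ} (ht : t + 1 < P.len) :
    (P.pt t).1 ≤ (P.pt (t + 1)).1 ∧ (P.pt (t + 1)).1 ≤ (P.pt t).1 + 1 ∧
      (P.pt t).2 ≤ (P.pt (t + 1)).2 ∧ (P.pt (t + 1)).2 ≤ (P.pt t).2 + 1 := by
  rcases P.step t ht with h | h | h <;> simp [h]

theorem monotoneOn_pt : MonotoneOn P.pt (Set.Iic (P.len - 1)) :=
  monotoneOn_of_le_succ Set.ordConnected_Iic fun t _ _ ht => by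
    rw [Order.succ_eq_add_one] at ht ⊢
    have := P.pt_succ_le (t := t) (by simp at ht; omega)
    exact Prod.mk_le_mk.2 ⟨this.1, this.2.2.1⟩

theorem mem_V_bounds {v : ℕ × ℕ} (hv : v ∈ P.V) :
    v.1 ∈ Icc 1 m ∧ v.2 ∈ Icc 1 n := by
  obtain ⟨t, ht, rfl⟩ := P.mem_V.1 hv
  have h0 := P.monotoneOn_pt (a := 0) (b := t) (by simp) (by simp; omega) (Nat.zero_le t)
  have h1 := P.monotoneOn_pt (a := t) (b := P.len - 1) (by simp; omega)
    (Set.mem_Iic.2 le_rfl) (by omega)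
  rw [P.first] at h0
  rw [P.last] at h1
  simp only [mem_Icc]
  exact ⟨⟨h0.1, h1.1⟩, ⟨h0.2, h1.2⟩⟩

theorem exists_mem_V_snd_eq {i : ℕ} (hi : i ∈ Icc 1 n) : ∃ v ∈ P.V, v.2 = i := by
  rw [mem_Icc] at hi
  obtain ⟨t, ht, hti⟩ := exists_apply_eq_of_le_add_one (f := fun t => (P.pt t).2)
    (N := P.len - 1) (c := i) (fun t ht => (P.pt_succ_le (by omega)).2.2.2)
    (by simp [P.first, hi.1]) (by simp [P.last, hi.2])
  exact ⟨P.pt t, P.mem_V.2 ⟨t, by have := P.len_pos; omega, rfl⟩, hti⟩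

theorem cost_nonneg (s s' : ℕ → ℝ) : 0 ≤ P.cost s s' :=
  sum_nonneg fun _ _ => sq_nonneg _

theorem sum_pen_le_cost {L U : ℝ} {z s' : ℕ → ℝ} (hz : ∀ j ∈ Icc 1 m, L ≤ z j ∧ z j ≤ U) :
    ∑ i ∈ Icc 1 n, pen L U (s' i) ≤ P.cost z s' := by
  rw [cost, ← sum_fiberwise_of_maps_to (g := Prod.snd) fun v hv => (P.mem_V_bounds hv).2]
  refine sum_le_sum fun i hi => ?_
  obtain ⟨v, hv, rfl⟩ := P.exists_mem_V_snd_eq hi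
  have hzv := hz _ (P.mem_V_bounds hv).1
  calc pen L U (s' v.2) ≤ (z v.1 - s' v.2) ^ 2 := pen_le_sq_sub hzv.1 hzv.2
    _ ≤ ∑ w ∈ P.V with w.2 = v.2, (z w.1 - s' w.2) ^ 2 :=
      single_le_sum (f := fun w : ℕ × ℕ => (z w.1 - s' w.2) ^ 2) (fun _ _ => sq_nonneg _)
        (mem_filter.2 ⟨hv, rfl⟩)

end WarpingPath

theorem nonempty_warpingPath {m n : ℕ} (hm : 1 ≤ m) (hn : 1 ≤ n) :
    Nonempty (WarpingPath m n) :=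
  -- the path `(1,1), (2,1), …, (m,1), (m,2), …, (m,n)`
  ⟨{ len := m + n - 1
     len_pos := by omega
     pt := fun t => (min (t + 1) m, max (t + 2 - m) 1)
     first := by simp only [Prod.mk.injEq]; omega
     last := by simp only [Prod.mk.injEq]; omega
     step := fun t _ => by
       simp only [Prod.mk.injEq]
       omega }⟩

theorem le_sq_dtw {m n : ℕ} {s s' : ℕ → ℝ} {b : ℝ} [Nonempty (WarpingPath m n)]
    (h : ∀ P : WarpingPath m n, b ≤ P.cost s s') : b ≤ dtw m n s s' ^ 2 := by
  have hne : {c : ℝ | ∃ P : WarpingPath m n, c = P.cost s s'}.Nonempty :=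
    ⟨_, Classical.arbitrary _, rfl⟩
  rw [dtw, Real.sq_sqrt (le_csInf hne fun _ ⟨P, hP⟩ => hP ▸ P.cost_nonneg s s')]
  exact le_csInf hne fun _ ⟨P, hP⟩ => hP ▸ h P

theorem sum_pen_le_sq_dtw {n m : ℕ} (hn : 1 ≤ n) {L U : ℝ} {z s' : ℕ → ℝ}
    (hz : ∀ j ∈ Icc 1 n, L ≤ z j ∧ z j ≤ U) :
    ∑ i ∈ Icc 1 m, pen L U (s' i) ≤ dtw n m z s' ^ 2 := by
  rcases Nat.eq_zero_or_pos m with rfl | hm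
  · simpa using sq_nonneg _
  · have := nonempty_warpingPath hn hm
    exact le_sq_dtw fun P => P.sum_pen_le_cost hz

theorem stmt6_general (k : ℕ) (m : Fin k → ℕ)
    (s : Fin k → ℕ → ℝ) (n : ℕ) (hn : 1 ≤ n) (z : ℕ → ℝ)
    (L U : ℝ) (hz : ∀ j ∈ Finset.Icc 1 n, L ≤ z j ∧ z j ≤ U) :
    (1 / (k : ℝ)) * ∑ l : Fin k, (dtw n (m l) z (s l)) ^ 2 ≥
      (1 / (k : ℝ)) * ∑ l : Fin k, ∑ i ∈ Finset.Icc 1 (m l), pen L U (s l i) := by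
  gcongr
  exact sum_pen_le_sq_dtw hn hz

theorem stmt6 (k : ℕ) (hk : 1 ≤ k) (m : Fin k → ℕ) (hm : ∀ l, 1 ≤ m l)
    (s : Fin k → ℕ → ℝ) (n : ℕ) (hn : 1 ≤ n) (z : ℕ → ℝ)
    (L U : ℝ) (hLU : L ≤ U) (hz : ∀ j ∈ Finset.Icc 1 n, L ≤ z j ∧ z j ≤ U) :
    (1 / (k : ℝ)) * ∑ l : Fin k, (dtw n (m l) z (s l)) ^ 2 ≥
      (1 / (k : ℝ)) * ∑ l : Fin k, ∑ i ∈ Finset.Icc 1 (m l), pen L U (s l i) :=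
  stmt6_general k m s n hn z L U hz
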